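/- arXiv:1503.08078 — 3 statements merged into one kernel-verified Lean document; each statement's English description precedes it below -/
import Mathlib

section
/- For a symmetric cost function on column placements satisfying the triangle inequality, moving a duplicate column next to its copy does not increase total cost: if bd is a symmetric function on column types satisfying bd(u,w) ≤ bd(u,v) + bd(v,w) and bd(v,v) = 0, then for a sequence of columns c_1,...,c_m with c_a = c_b (a+1 < b), the sequence obtained by moving c_b to position a+1 has total consecutive cost ∑ bd(c'_i, c'_{i+1}) at most the original ∑ bd(c_i, c_{i+1}). -/
/-- The total consecutive cost `∑ bd(c_i, c_{i+1})` of a sequence of column types. -/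
def cost {T : Type*} (bd : T → T → ℕ) : List T → ℕ
  | x :: y :: rest => bd x y + cost bd (y :: rest)
  | _ => 0

/-
Write `x = c_a = c_b`. Placing the copy of `x` directly after `c_a` adds the edge `bd(x, x) = 0`,
so the new cost is the cost of the sequence with `c_b` simply deleted. Deleting an entry never
increases the cost: it replaces `bd(u, v) + bd(v, w)` by `bd(u, w)`, or drops an edge at an end.
-/

namespace cost

variable {T : Type*} (bd : T → T → ℕ)

@[simp]
theorem singleton (x : T) : cost bd [x] = 0 := rfl

@[simp]
theorem cons_cons (x y : T) (l : List T) :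
    cost bd (x :: y :: l) = bd x y + cost bd (y :: l) := rfl

theorem append_cons : ∀ (P : List T) (x : T) (L : List T),
    cost bd (P ++ x :: L) = cost bd (P ++ [x]) + cost bd (x :: L)
  | [], _, _ => by simp
  | [_], _, _ => by simp
  | p :: q :: P, x, L => by
    show bd p q + cost bd (q :: P ++ x :: L) = bd p q + cost bd (q :: P ++ [x]) + cost bd (x :: L)
    rw [append_cons (q :: P), Nat.add_assoc]

theorem append_cons_cons_self (hzero : ∀ x, bd x x = 0) (P : List T) (x : T) (L : List T) :
    cost bd (P ++ x :: x :: L) = cost bd (P ++ x :: L) := by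
  rw [append_cons, append_cons bd P x L, cons_cons, hzero, Nat.zero_add]

theorem le_cons (x : T) : ∀ L : List T, cost bd L ≤ cost bd (x :: L)
  | [] => le_rfl
  | _ :: _ => Nat.le_add_left _ _

theorem cons_le_cons_cons (htri : ∀ x y z, bd x z ≤ bd x y + bd y z) (x y : T) :
    ∀ L : List T, cost bd (x :: L) ≤ cost bd (x :: y :: L)
  | [] => Nat.zero_le _
  | z :: L => by
    simp only [cons_cons, ← Nat.add_assoc]
    exact Nat.add_le_add_right (htri x y z) _

theorem cons_eraseIdx_le (htri : ∀ x y z, bd x z ≤ bd x y + bd y z) :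
    ∀ (x : T) (L : List T) (k : ℕ), cost bd (x :: L.eraseIdx k) ≤ cost bd (x :: L)
  | _, [], _ => le_rfl
  | x, y :: L, 0 => cons_le_cons_cons bd htri x y L
  | _, y :: L, k + 1 => Nat.add_le_add_left (cons_eraseIdx_le htri y L k) _

theorem eraseIdx_le (htri : ∀ x y z, bd x z ≤ bd x y + bd y z) :
    ∀ (L : List T) (k : ℕ), cost bd (L.eraseIdx k) ≤ cost bd L
  | [], _ => le_rfl
  | x :: L, 0 => le_cons bd x L
  | x :: L, _ + 1 => cons_eraseIdx_le bd htri x L _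

end cost

/-- For a symmetric cost `bd` with `bd(x,x) = 0` satisfying the triangle
inequality, moving a duplicate column next to its copy does not increase the
total consecutive cost: if `c_a = c_b` with `a+1 < b`, then the sequence
`(c_1, ..., c_a, c_b, c_{a+1}, ..., c_{b−1}, c_{b+1}, ..., c_m)` has total
consecutive cost at most that of `(c_1, ..., c_m)`. -/
theorem stmt_6 {T : Type*} (bd : T → T → ℕ)
    (hzero : ∀ x, bd x x = 0)
    (htri : ∀ x y z, bd x z ≤ bd x y + bd y z)
    (l : List T) (a b : ℕ) (hab : a + 1 < b) (hbl : b < l.length)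
    (heq : l[a]'(by omega) = l[b]'hbl) :
    cost bd (l.take (a + 1) ++ [l[b]'hbl] ++ (l.drop (a + 1)).eraseIdx (b - (a + 1)))
      ≤ cost bd l := by
  set E := (l.drop (a + 1)).eraseIdx (b - (a + 1))
  have htake : l.take (a + 1) = l.take a ++ [l[b]] := by
    rw [← heq]; exact List.take_succ_eq_append_getElem _
  have herase : l.eraseIdx b = l.take (a + 1) ++ E := by
    conv_lhs => rw [← List.take_append_drop (a + 1) l]
    rw [List.eraseIdx_append_of_length_le (by rw [List.length_take]; omega), List.length_take_of_le (by omega)]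
  calc cost bd (l.take (a + 1) ++ [l[b]] ++ E)
      = cost bd (l.take a ++ l[b] :: l[b] :: E) := by
        simp only [htake, List.append_assoc, List.cons_append, List.nil_append]
    _ = cost bd (l.take a ++ l[b] :: E) := cost.append_cons_cons_self bd hzero _ _ _
    _ = cost bd (l.eraseIdx b) := by
        simp only [herase, htake, List.append_assoc, List.cons_append, List.nil_append]
    _ ≤ cost bd l := cost.eraseIdx_le bd htri l b
end

section
/- Any finite sequence over a set T equipped with a symmetric cost bd satisfying the triangle inequality and bd(x,x)=0 can be rearranged (as a permutation of its entries) into a 'consecutive' sequence—one in which equal entries occupy contiguous blocks—without increasing the total consecutive cost ∑ bd(c_i, c_{i+1}). -/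
section

variable {T : Type*}

def Consecutive (l : List T) : Prop :=
  ∀ (i j k : ℕ) (hij : i < j) (hjk : j < k) (hk : k < l.length),
    l[i]'(hij.trans (hjk.trans hk)) = l[k] → l[i]'(hij.trans (hjk.trans hk)) = l[j]'(hjk.trans hk)

theorem Consecutive.cons {a : T} {l : List T} (hl : Consecutive l)
    (ha : ∀ k (hk : k < l.length), l[k] = a → ∀ j (_ : j < k), l[j] = a) :
    Consecutive (a :: l) := by
  rintro (_ | i) (_ | j) (_ | k) hij hjk hk h <;> try omega
  · exact (ha k (by simpa using hk) h.symm j (by omega)).symm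
  · exact hl i j k (by omega) (by omega) (by simpa using hk) h

theorem Consecutive.replicate_append {a : T} {r : List T} (har : a ∉ r) (hr : Consecutive r)
    (n : ℕ) : Consecutive (List.replicate n a ++ r) := by
  induction n with
  | zero => simpa
  | succ n ih =>
    rw [List.replicate_succ, List.cons_append]
    refine ih.cons fun k hk hka j hjk => ?_
    have hkn : k < n := by
      by_contra hkn
      rw [List.getElem_append_right (by simpa using hkn)] at hka
      exact har (hka ▸ List.getElem_mem _)
    rw [List.getElem_append_left (by simp; omega)]
    simp

section gather
variable [DecidableEq T]

def gather : List T → List T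
  | [] => []
  | a :: l => a :: (List.replicate (l.count a) a ++ gather (l.filter (· ≠ a)))
termination_by l => l.length
decreasing_by
  exact Nat.lt_succ_of_le
    ((List.length_unattach ..).trans_le ((List.length_filter_le _ _).trans_eq List.length_attach))

@[elab_as_elim]
theorem gather_induction {motive : List T → Prop} (nil : motive [])
    (cons : ∀ a l, motive (l.filter (· ≠ a)) → motive (a :: l)) : ∀ l, motive l
  | [] => nil
  | a :: l => cons a l (gather_induction nil cons (l.filter (· ≠ a)))
termination_by l => l.length
decreasing_by exact Nat.lt_succ_of_le (List.length_filter_le _ _)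

theorem gather_perm (l : List T) : (gather l).Perm l := by
  induction l using gather_induction with
  | nil => simp [gather]
  | cons a l ih =>
    rw [gather, ← List.filter_eq]
    refine (((List.Perm.refl _).append ih).trans ?_).cons a
    simpa using List.filter_append_perm (· = a) l

theorem consecutive_gather (l : List T) : Consecutive (gather l) := by
  induction l using gather_induction with
  | nil => simp [gather, Consecutive]
  | cons a l ih =>
    rw [gather, ← List.cons_append, ← List.replicate_succ]
    refine ih.replicate_append (fun ha => ?_) _
    simpa using (gather_perm _).subset ha

end gather

variable (bd : T → T → ℕ)

theorem cost_cons_le_add (htri : ∀ x y z, bd x z ≤ bd x y + bd y z) (a x : T) (l : List T) :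
    cost bd (a :: l) ≤ bd a x + cost bd (x :: l) := by
  cases l with
  | nil => exact Nat.zero_le _
  | cons y l => simp only [cost]; linarith [htri a x y]

theorem cost_cons_le_of_sublist (htri : ∀ x y z, bd x z ≤ bd x y + bd y z) {l₁ l₂ : List T}
    (h : l₁.Sublist l₂) (a : T) : cost bd (a :: l₁) ≤ cost bd (a :: l₂) := by
  induction h generalizing a with
  | slnil => rfl
  | cons x _ ih =>
    exact (cost_cons_le_add bd htri a x _).trans (by simp only [cost]; linarith [ih x])
  | cons_cons x _ ih => simp only [cost]; linarith [ih x]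

theorem cost_cons_replicate_append (hzero : ∀ x, bd x x = 0) (a : T) (n : ℕ) (l : List T) :
    cost bd (a :: (List.replicate n a ++ l)) = cost bd (a :: l) := by
  induction n with
  | zero => rfl
  | succ n ih => rw [List.replicate_succ, List.cons_append, cost, hzero, zero_add, ih]

variable [DecidableEq T]

theorem cost_cons_gather_le (hzero : ∀ x, bd x x = 0) (htri : ∀ x y z, bd x z ≤ bd x y + bd y z)
    (x : T) (l : List T) : cost bd (x :: gather l) ≤ cost bd (x :: l) := by
  induction l using gather_induction generalizing x with
  | nil => simp [gather]
  | cons a l ih =>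
    rw [gather, cost, cost, cost_cons_replicate_append bd hzero]
    gcongr
    exact (ih a).trans (cost_cons_le_of_sublist bd htri List.filter_sublist a)

theorem cost_gather_le (hzero : ∀ x, bd x x = 0) (htri : ∀ x y z, bd x z ≤ bd x y + bd y z)
    (l : List T) : cost bd (gather l) ≤ cost bd l := by
  cases l with
  | nil => simp [gather]
  | cons a l =>
    rw [gather, cost_cons_replicate_append bd hzero]
    exact (cost_cons_gather_le bd hzero htri a _).trans
      (cost_cons_le_of_sublist bd htri List.filter_sublist a)

end

/-- Any finite sequence over `T` with a symmetric cost `bd` satisfying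
`bd(x,x) = 0` and the triangle inequality can be permuted into a consecutive
sequence (equal entries occupy contiguous blocks) without increasing the total
consecutive cost. -/
theorem stmt_7 {T : Type*} (bd : T → T → ℕ)
    (hzero : ∀ x, bd x x = 0)
    (htri : ∀ x y z, bd x z ≤ bd x y + bd y z)
    (l : List T) :
    ∃ l' : List T, l'.Perm l ∧
      (∀ (i j k : ℕ) (hij : i < j) (hjk : j < k) (hk : k < l'.length),
        l'[i]'(by omega) = l'[k]'hk → l'[i]'(by omega) = l'[j]'(by omega)) ∧
      cost bd l' ≤ cost bd l := by
  classical
  exact ⟨gather l, gather_perm l, consecutive_gather l, cost_gather_le bd hzero htri l⟩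
end

section
/- In an r × m grid (r, m ≥ 2), a placement of the distinct labels {(i,j) : i ∈ [r], j ∈ [m]} onto the cells such that every pair of neighboring cells receives labels at Manhattan distance exactly 1 must be one of the 8 (or fewer) grid symmetries composed with the identity labeling; in particular, if additionally the labels of two adjacent corners are fixed to their identity positions, the placement is the identity. -/
/-!
An adjacency-preserving map of the grid does not increase Manhattan distance, since it maps a
monotone lattice path between two cells to a path of the same length. A bijection of a finite
set that does not increase distances preserves the (finite) sum of all pairwise distances, so
it preserves every distance. Finally, a cell `(i, j)` is determined by its distances
`i + j` and `i + (m - 1 - j)` to the two corners of the first row.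
-/

/-- Two cells of an `r × m` array are neighbors iff their Manhattan distance is `1`. -/
abbrev adj {r m : ℕ} (u v : Fin r × Fin m) : Prop :=
  Nat.dist (u.1 : ℕ) (v.1 : ℕ) + Nat.dist (u.2 : ℕ) (v.2 : ℕ) = 1

open Finset

theorem Equiv.Perm.apply_eq_of_forall_apply_le {β M : Type*} [Fintype β] [AddCommMonoid M]
    [PartialOrder M] [IsOrderedCancelAddMonoid M] (e : Equiv.Perm β) (g : β → M)
    (h : ∀ p, g (e p) ≤ g p) (p : β) : g (e p) = g p := by
  have hsum : ∑ q, g (e q) = ∑ q, g q := Equiv.sum_comp e g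
  exact (sum_eq_sum_iff_of_le fun q _ => h q).1 hsum p (mem_univ p)

theorem Fin.exists_dist_eq_one_and_dist_add_one_eq {r : ℕ} {i j : Fin r} (hij : i ≠ j) :
    ∃ k : Fin r, Nat.dist i k = 1 ∧ Nat.dist k j + 1 = Nat.dist i j := by
  have hij' : (i : ℕ) ≠ j := Fin.val_ne_of_ne hij
  rcases Nat.lt_or_gt_of_ne hij' with hlt | hgt
  · exact ⟨⟨i + 1, by omega⟩, by simp only [Nat.dist]; omega⟩
  · exact ⟨⟨i - 1, by omega⟩, by simp only [Nat.dist]; omega⟩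

namespace Grid

variable {r m : ℕ}

def mdist (u v : Fin r × Fin m) : ℕ :=
  Nat.dist u.1 v.1 + Nat.dist u.2 v.2

theorem mdist_self (u : Fin r × Fin m) : mdist u u = 0 := by
  simp only [mdist, Nat.dist_self]

theorem eq_of_mdist_eq_zero {u v : Fin r × Fin m} (h : mdist u v = 0) : u = v := by
  have h₁ : Nat.dist u.1 v.1 = 0 := by unfold mdist at h; omega
  have h₂ : Nat.dist u.2 v.2 = 0 := by unfold mdist at h; omega
  exact Prod.ext (Fin.ext (Nat.eq_of_dist_eq_zero h₁)) (Fin.ext (Nat.eq_of_dist_eq_zero h₂))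

theorem mdist_triangle (u v w : Fin r × Fin m) : mdist u w ≤ mdist u v + mdist v w := by
  have h₁ := Nat.dist.triangle_inequality u.1 v.1 w.1
  have h₂ := Nat.dist.triangle_inequality u.2 v.2 w.2
  unfold mdist
  omega

theorem exists_adj_mdist_eq_of_mdist_eq_succ {u v : Fin r × Fin m} {n : ℕ}
    (h : mdist u v = n + 1) : ∃ w, adj u w ∧ mdist w v = n := by
  unfold mdist at h
  by_cases h₁ : u.1 = v.1
  · have h₂ : u.2 ≠ v.2 := fun h₂ => by simp [h₁, h₂, Nat.dist_self] at h
    obtain ⟨k, hk, hkv⟩ := Fin.exists_dist_eq_one_and_dist_add_one_eq h₂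
    refine ⟨(u.1, k), ?_, ?_⟩ <;> simp only [adj, mdist, h₁, Nat.dist_self] at h ⊢ <;> omega
  · obtain ⟨k, hk, hkv⟩ := Fin.exists_dist_eq_one_and_dist_add_one_eq h₁
    refine ⟨(k, u.2), ?_, ?_⟩ <;> simp only [adj, mdist, Nat.dist_self] at h ⊢ <;> omega

theorem mdist_map_le_of_adj {r' m' : ℕ} (f : Fin r × Fin m → Fin r' × Fin m')
    (hf : ∀ u v, adj u v → adj (f u) (f v)) (u v : Fin r × Fin m) :
    mdist (f u) (f v) ≤ mdist u v := by
  suffices key : ∀ n u, mdist u v = n → mdist (f u) (f v) ≤ n from key _ u rfl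
  intro n
  induction n with
  | zero =>
    intro u hu
    rw [eq_of_mdist_eq_zero hu, mdist_self]
  | succ n ih =>
    intro u hu
    obtain ⟨w, huw, hwv⟩ := exists_adj_mdist_eq_of_mdist_eq_succ hu
    calc mdist (f u) (f v) ≤ mdist (f u) (f w) + mdist (f w) (f v) := mdist_triangle _ _ _
      _ ≤ 1 + n := Nat.add_le_add (hf u w huw).le (ih w hwv)
      _ = n + 1 := Nat.add_comm 1 n

theorem mdist_map_eq_of_adj (σ : Equiv.Perm (Fin r × Fin m))
    (hσ : ∀ u v, adj u v → adj (σ u) (σ v)) (u v : Fin r × Fin m) :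
    mdist (σ u) (σ v) = mdist u v :=
  Equiv.Perm.apply_eq_of_forall_apply_le (σ.prodCongr σ) (fun p => mdist p.1 p.2)
    (fun p => mdist_map_le_of_adj σ hσ p.1 p.2) (u, v)

theorem eq_of_mdist_corners_eq (hr : 0 < r) (hm : 0 < m) {u v : Fin r × Fin m}
    (h₁ : mdist u (⟨0, hr⟩, ⟨0, hm⟩) = mdist v (⟨0, hr⟩, ⟨0, hm⟩))
    (h₂ : mdist u (⟨0, hr⟩, ⟨m - 1, by omega⟩) = mdist v (⟨0, hr⟩, ⟨m - 1, by omega⟩)) :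
    u = v := by
  have hu := u.2.isLt
  have hv := v.2.isLt
  simp only [mdist, Nat.dist] at h₁ h₂
  exact Prod.ext (Fin.ext (by omega)) (Fin.ext (by omega))

end Grid

/-- A bijection of the cells of an `r × m` grid (`r, m ≥ 2`) that maps
neighboring cells to neighboring cells is a grid symmetry; in particular, if it
fixes the two adjacent corners `(1,1)` and `(1,m)`, it is the identity. -/
theorem stmt_19 (r m : ℕ) (hr : 2 ≤ r) (hm : 2 ≤ m)
    (σ : (Fin r × Fin m) ≃ (Fin r × Fin m))
    (hadj : ∀ u v : Fin r × Fin m, adj u v → adj (σ u) (σ v))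
    (hc1 : σ (⟨0, by omega⟩, ⟨0, by omega⟩) = (⟨0, by omega⟩, ⟨0, by omega⟩))
    (hc2 : σ (⟨0, by omega⟩, ⟨m - 1, by omega⟩) = (⟨0, by omega⟩, ⟨m - 1, by omega⟩)) :
    σ = Equiv.refl (Fin r × Fin m) := by
  ext1 u
  have h₁ := Grid.mdist_map_eq_of_adj σ hadj u (⟨0, by omega⟩, ⟨0, by omega⟩)
  have h₂ := Grid.mdist_map_eq_of_adj σ hadj u (⟨0, by omega⟩, ⟨m - 1, by omega⟩)
  rw [hc1] at h₁
  rw [hc2] at h₂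
  exact Grid.eq_of_mdist_corners_eq (by omega) (by omega) h₁ h₂
end
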